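/- Let χ̂ : {1,…,n′} → {ℓ,r,b}, let χ : {1,…,n} → {ℓ,r} be its ℓ-r-replacement with n = n′ + |χ̂⁻¹({b})|, and let 0_{BNC_ffb(χ̂)} be the partition of {1,…,n} whose blocks are the pairs {j, j+1} for j ∈ f(χ̂⁻¹({b})) and the singletons {i} for i ∈ f(χ̂⁻¹({ℓ,r})). Then 0_{BNC_ffb(χ̂)} ∈ BNC(χ), and for every π ∈ BNC(χ) one has π ∈ BNC_ffb(χ̂) if and only if 0_{BNC_ffb(χ̂)} ≤ π; thus BNC_ffb(χ̂) is the interval of the lattice BNC(χ) with minimum element 0_{BNC_ffb(χ̂)} and maximum element the one-block partition 1_χ. -/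
import Mathlib


/-! Basic combinatorics of bi-non-crossing partitions. -/

/-- The two sides: left and right. -/
inductive LRside : Type
  | l : LRside
  | r : LRside
deriving DecidableEq

/-- A partition (encoded as a setoid, i.e. by the equivalence relation whose classes
are the blocks) is *non-crossing* if there are no `a₁ < b₁ < a₂ < b₂` with
`a₁ ∼ a₂`, `b₁ ∼ b₂` but `a₁ ≁ b₁`. -/
def NonCrossing {n : ℕ} (π : Setoid (Fin n)) : Prop :=
  ∀ a b c d : Fin n, a < b → b < c → c < d → π.r a c → π.r b d → π.r a b

/-- The list underlying the permutation `s_χ`: the elements of `χ⁻¹({ℓ})` in increasing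
order, followed by the elements of `χ⁻¹({r})` in decreasing order. -/
def sChiList {n : ℕ} (χ : Fin n → LRside) : List (Fin n) :=
  ((List.finRange n).filter fun i => χ i = LRside.l) ++
    (((List.finRange n).filter fun i => χ i = LRside.r).reverse)

lemma sChiList_length {n : ℕ} (χ : Fin n → LRside) : (sChiList χ).length = n := by
  have key : ∀ L : List (Fin n),
      (L.filter fun i => χ i = LRside.l).length +
        (L.filter fun i => χ i = LRside.r).length = L.length := by
    intro L
    induction L with
    | nil => simp
    | cons a t ih =>
      cases h : χ a <;> simp [List.filter_cons, h] <;> omega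
  have := key (List.finRange n)
  simp only [sChiList, List.length_append, List.length_reverse]
  simpa [List.length_finRange] using this

lemma sChiList_nodup {n : ℕ} (χ : Fin n → LRside) : (sChiList χ).Nodup := by
  refine List.Nodup.append ((List.nodup_finRange n).filter _)
    (List.nodup_reverse.mpr ((List.nodup_finRange n).filter _)) ?_
  intro a ha hb
  simp only [List.mem_filter, List.mem_reverse, decide_eq_true_eq] at ha hb
  rw [ha.2] at hb
  exact absurd hb.2 (by simp)

/-- The permutation `s_χ`. -/
noncomputable def sChi {n : ℕ} (χ : Fin n → LRside) : Equiv.Perm (Fin n) :=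
  Equiv.ofBijective (fun j => (sChiList χ).get (Fin.cast (sChiList_length χ).symm j))
    (by
      rw [Fintype.bijective_iff_injective_and_card]
      refine ⟨fun a b hab => ?_, rfl⟩
      have := List.Nodup.get_inj_iff (sChiList_nodup χ) |>.mp hab
      exact Fin.cast_injective _ this)

/-- The set of bi-non-crossing partitions with respect to `χ`: those `π` such that
`s_χ⁻¹ ⋅ π` (whose blocks are the preimages under `s_χ` of the blocks of `π`) is
non-crossing. -/
noncomputable def BNC {n : ℕ} (χ : Fin n → LRside) : Set (Setoid (Fin n)) :=
  {π | NonCrossing (Setoid.comap (sChi χ) π)}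

/-! The ℓ-r-replacement of a map into `{ℓ, r, b}`. -/

/-- The three labels: left, right, boolean. -/
inductive LRB : Type
  | l : LRB
  | r : LRB
  | b : LRB
deriving DecidableEq

/-- The number of indices coloured `b` by `χ̂`. -/
def countB {n' : ℕ} (χh : Fin n' → LRB) : ℕ :=
  (Finset.univ.filter fun i => χh i = LRB.b).card

/-- The map `f(i) = i + |χ̂⁻¹({b}) ∩ [1, i−1]|` (with indices taken `0`-based). -/
def fMap {n' : ℕ} (χh : Fin n' → LRB) (i : Fin n') : Fin (n' + countB χh) :=
  ⟨i + (Finset.univ.filter fun j => j < i ∧ χh j = LRB.b).card, by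
    have h1 : (Finset.univ.filter fun j => j < i ∧ χh j = LRB.b).card ≤ countB χh := by
      apply Finset.card_le_card
      intro x hx
      simp only [Finset.mem_filter, Finset.mem_univ, true_and] at hx ⊢
      exact hx.2
    have h2 := i.isLt
    omega⟩

/-- `χ` is the ℓ-r-replacement of `χ̂`: it agrees with `χ̂` along `f` on non-`b` indices,
and replaces each `b` index by the consecutive pair `ℓ, r`. (These conditions determine
`χ` uniquely.) -/
def IsReplacement {n' : ℕ} (χh : Fin n' → LRB)
    (χ : Fin (n' + countB χh) → LRside) : Prop :=
  ∀ i : Fin n',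
    (χh i = LRB.l → χ (fMap χh i) = LRside.l) ∧
    (χh i = LRB.r → χ (fMap χh i) = LRside.r) ∧
    (χh i = LRB.b → χ (fMap χh i) = LRside.l ∧
      ∀ h : (fMap χh i : ℕ) + 1 < n' + countB χh, χ ⟨(fMap χh i : ℕ) + 1, h⟩ = LRside.r)

/-- `BNC_ffb(χ̂)`: the bi-non-crossing partitions `π ∈ BNC(χ)` such that whenever
`i ∈ f(χ̂⁻¹({b}))` lies in a block `V` of `π`, then also `i+1 ∈ V`. -/
noncomputable def BNCffb {n' : ℕ} (χh : Fin n' → LRB)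
    (χ : Fin (n' + countB χh) → LRside) : Set (Setoid (Fin (n' + countB χh))) :=
  {π | π ∈ BNC χ ∧ ∀ i : Fin n', χh i = LRB.b →
    ∀ h : (fMap χh i : ℕ) + 1 < n' + countB χh,
      π.r (fMap χh i) ⟨(fMap χh i : ℕ) + 1, h⟩}

/-- The partition `0_{BNC_ffb(χ̂)}`: blocks are the pairs `{f(i), f(i)+1}` for the
`b`-coloured `i`, and singletons elsewhere.  (As a setoid, it is generated by those
pairs.) -/
noncomputable def zeroFfb {n' : ℕ} (χh : Fin n' → LRB) :
    Setoid (Fin (n' + countB χh)) :=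
  Relation.EqvGen.setoid (fun x y =>
    ∃ (i : Fin n') (h : (fMap χh i : ℕ) + 1 < n' + countB χh),
      χh i = LRB.b ∧ x = fMap χh i ∧ y = ⟨(fMap χh i : ℕ) + 1, h⟩)


section SChiAux
variable {n : ℕ} (χ : Fin n → LRside)

def listL : List (Fin n) := (List.finRange n).filter fun i => χ i = LRside.l
def listR : List (Fin n) := (List.finRange n).filter fun i => χ i = LRside.r

lemma sChi_apply (k : Fin n) :
    sChi χ k = (sChiList χ)[(k : ℕ)]'(by rw [sChiList_length]; exact k.isLt) := rfl

lemma len_sum : (listL χ).length + (listR χ).length = n := by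
  have := sChiList_length χ
  simpa [sChiList, listL, listR, List.length_append] using this

lemma sChi_low (k : Fin n) (h : (k : ℕ) < (listL χ).length) :
    sChi χ k = (listL χ)[(k : ℕ)] := by
  rw [sChi_apply]
  exact List.getElem_append_left h

lemma sChi_high (k : Fin n) (h : (listL χ).length ≤ (k : ℕ)) :
    sChi χ k = ((listR χ).reverse)[(k : ℕ) - (listL χ).length]'(by
      have := len_sum χ; have := k.isLt; simp only [List.length_reverse]; omega) := by
  rw [sChi_apply]
  exact List.getElem_append_right h

lemma chi_sChi_low (k : Fin n) (h : (k : ℕ) < (listL χ).length) :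
    χ (sChi χ k) = LRside.l := by
  rw [sChi_low χ k h]
  have hm : (listL χ)[(k : ℕ)] ∈ listL χ := List.getElem_mem _
  exact of_decide_eq_true (List.mem_filter.mp hm).2

lemma chi_sChi_high (k : Fin n) (h : (listL χ).length ≤ (k : ℕ)) :
    χ (sChi χ k) = LRside.r := by
  rw [sChi_high χ k h]
  have : ((listR χ).reverse)[(k : ℕ) - (listL χ).length]'(by
      have := len_sum χ; have := k.isLt; simp only [List.length_reverse]; omega) ∈
      (listR χ).reverse := List.getElem_mem _
  rw [List.mem_reverse] at this
  exact of_decide_eq_true (List.mem_filter.mp this).2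

lemma lt_of_chi_l (k : Fin n) (h : χ (sChi χ k) = LRside.l) :
    (k : ℕ) < (listL χ).length := by
  by_contra hc
  rw [chi_sChi_high χ k (by omega)] at h
  exact absurd h (by simp)

lemma le_of_chi_r (k : Fin n) (h : χ (sChi χ k) = LRside.r) :
    (listL χ).length ≤ (k : ℕ) := by
  by_contra hc
  rw [chi_sChi_low χ k (by omega)] at h
  exact absurd h (by simp)

lemma pairwise_listL : (listL χ).Pairwise (· < ·) :=
  (List.pairwise_lt_finRange n).filter _

lemma pairwise_listR_rev : ((listR χ).reverse).Pairwise (fun a b => b < a) :=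
  List.pairwise_reverse.mpr ((List.pairwise_lt_finRange n).filter _)

lemma sChi_lt_of_l {k1 k2 : Fin n} (h12 : k1 < k2)
    (h1 : χ (sChi χ k1) = LRside.l) (h2 : χ (sChi χ k2) = LRside.l) :
    sChi χ k1 < sChi χ k2 := by
  have hl1 := lt_of_chi_l χ k1 h1
  have hl2 := lt_of_chi_l χ k2 h2
  rw [sChi_low χ k1 hl1, sChi_low χ k2 hl2]
  exact List.pairwise_iff_get.mp (pairwise_listL χ) ⟨k1, hl1⟩ ⟨k2, hl2⟩ h12

lemma sChi_gt_of_r {k1 k2 : Fin n} (h12 : k1 < k2)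
    (h1 : χ (sChi χ k1) = LRside.r) (h2 : χ (sChi χ k2) = LRside.r) :
    sChi χ k2 < sChi χ k1 := by
  have hr1 := le_of_chi_r χ k1 h1
  have hr2 := le_of_chi_r χ k2 h2
  have hlen : (listL χ).length + (listR χ).length = n := len_sum χ
  have b1 : (k1 : ℕ) - (listL χ).length < ((listR χ).reverse).length := by
    have := k1.isLt; simp only [List.length_reverse]; omega
  have b2 : (k2 : ℕ) - (listL χ).length < ((listR χ).reverse).length := by
    have := k2.isLt; simp only [List.length_reverse]; omega
  rw [sChi_high χ k1 hr1, sChi_high χ k2 hr2]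
  exact List.pairwise_iff_get.mp (pairwise_listR_rev χ)
    ⟨_, b1⟩ ⟨_, b2⟩ (by simp only [Fin.mk_lt_mk]; have : (k1:ℕ) < k2 := h12; omega)

end SChiAux

-- fMap lemmas
section FMapAux
variable {n' : ℕ} (χh : Fin n' → LRB)

lemma fMap_val (i : Fin n') :
    (fMap χh i : ℕ) = i + (Finset.univ.filter fun j => j < i ∧ χh j = LRB.b).card := rfl

lemma fMap_strictMono {i j : Fin n'} (h : i < j) : (fMap χh i : ℕ) < fMap χh j := by
  rw [fMap_val, fMap_val]
  have hc : (Finset.univ.filter fun k => k < i ∧ χh k = LRB.b).card ≤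
      (Finset.univ.filter fun k => k < j ∧ χh k = LRB.b).card := by
    apply Finset.card_le_card
    intro x hx
    simp only [Finset.mem_filter, Finset.mem_univ, true_and] at hx ⊢
    exact ⟨hx.1.trans h, hx.2⟩
  have : (i : ℕ) < j := h
  omega

lemma fMap_add_one_lt {i j : Fin n'} (hb : χh i = LRB.b) (h : i < j) :
    (fMap χh i : ℕ) + 1 < fMap χh j := by
  rw [fMap_val, fMap_val]
  have hc : (Finset.univ.filter fun k => k < i ∧ χh k = LRB.b).card <
      (Finset.univ.filter fun k => k < j ∧ χh k = LRB.b).card := by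
    apply Finset.card_lt_card
    constructor
    · intro x hx
      simp only [Finset.mem_filter, Finset.mem_univ, true_and] at hx ⊢
      exact ⟨hx.1.trans h, hx.2⟩
    · intro hsub
      have := hsub (by simp only [Finset.mem_filter, Finset.mem_univ, true_and]; exact ⟨h, hb⟩ :
        i ∈ Finset.univ.filter fun k => k < j ∧ χh k = LRB.b)
      simp only [Finset.mem_filter, Finset.mem_univ, true_and] at this
      exact absurd this.1 (lt_irrefl i)
  have : (i : ℕ) < j := h
  omega

lemma fMap_succ_ne {i j : Fin n'} (hb : χh i = LRB.b) :
    (fMap χh i : ℕ) + 1 ≠ (fMap χh j : ℕ) := by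
  rcases lt_trichotomy i j with hij | hij | hij
  · exact Nat.ne_of_lt (fMap_add_one_lt χh hb hij)
  · subst hij; omega
  · have := fMap_strictMono χh hij; omega

lemma fMap_inj {i j : Fin n'} (h : (fMap χh i : ℕ) = (fMap χh j : ℕ)) : i = j := by
  rcases lt_trichotomy i j with hij | hij | hij
  · exact absurd h (Nat.ne_of_lt (fMap_strictMono χh hij))
  · exact hij
  · exact absurd h.symm (Nat.ne_of_lt (fMap_strictMono χh hij))

end FMapAux

section Main
variable {n' : ℕ} (χh : Fin n' → LRB) (χ : Fin (n' + countB χh) → LRside)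

/-- The generating relation of `zeroFfb`. -/
def pairRel : Fin (n' + countB χh) → Fin (n' + countB χh) → Prop := fun x y =>
  ∃ (i : Fin n') (h : (fMap χh i : ℕ) + 1 < n' + countB χh),
    χh i = LRB.b ∧ x = fMap χh i ∧ y = ⟨(fMap χh i : ℕ) + 1, h⟩

lemma eqvGen_pairRel {x y : Fin (n' + countB χh)}
    (h : Relation.EqvGen (pairRel χh) x y) :
    x = y ∨ pairRel χh x y ∨ pairRel χh y x := by
  induction h with
  | rel a b hab => exact Or.inr (Or.inl hab)
  | refl a => exact Or.inl rfl
  | symm a b _ ih =>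
    rcases ih with h | h | h
    · exact Or.inl h.symm
    · exact Or.inr (Or.inr h)
    · exact Or.inr (Or.inl h)
  | trans a b c _ _ ih1 ih2 =>
    rcases ih1 with h1 | h1 | h1
    · subst h1; exact ih2
    · rcases ih2 with h2 | h2 | h2
      · subst h2; exact Or.inr (Or.inl h1)
      · -- pairRel a b, pairRel b c : b = f i + 1 = f j, contradiction
        obtain ⟨i, hi, hib, ha, hb⟩ := h1
        obtain ⟨j, hj, hjb, hb', hc⟩ := h2
        exfalso
        have : (fMap χh i : ℕ) + 1 = (fMap χh j : ℕ) := by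
          rw [hb'] at hb; exact (congrArg Fin.val hb).symm
        exact fMap_succ_ne χh hib this
      · -- pairRel a b, pairRel c b : b = f i + 1 = f j + 1 → i = j → a = c
        obtain ⟨i, hi, hib, ha, hb⟩ := h1
        obtain ⟨j, hj, hjb, hc, hb'⟩ := h2
        have hv : (fMap χh j : ℕ) = (fMap χh i : ℕ) := by
          rw [hb'] at hb
          simpa using congrArg Fin.val hb
        have hij : i = j := (fMap_inj χh hv).symm
        subst hij
        left; rw [ha, hc]
    · rcases ih2 with h2 | h2 | h2
      · subst h2; exact Or.inr (Or.inr h1)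
      · -- pairRel b a, pairRel b c : b = f i = f j → i = j → a = c
        obtain ⟨i, hi, hib, hb, ha⟩ := h1
        obtain ⟨j, hj, hjb, hb', hc⟩ := h2
        have : (fMap χh i : ℕ) = (fMap χh j : ℕ) := by
          rw [hb'] at hb; exact (congrArg Fin.val hb).symm
        have hij : i = j := fMap_inj χh this
        subst hij
        left; rw [ha, hc]
      · -- pairRel b a, pairRel c b : b = f i, b = f j + 1, contradiction
        obtain ⟨i, hi, hib, hb, ha⟩ := h1
        obtain ⟨j, hj, hjb, hc, hb'⟩ := h2
        exfalso
        have : (fMap χh j : ℕ) + 1 = (fMap χh i : ℕ) := by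
          rw [hb'] at hb; exact congrArg Fin.val hb
        exact fMap_succ_ne χh hjb this

end Main


/-- `0_{BNC_ffb(χ̂)}` belongs to `BNC(χ)`; a partition `π ∈ BNC(χ)`
belongs to `BNC_ffb(χ̂)` iff `0_{BNC_ffb(χ̂)} ≤ π`; and `BNC_ffb(χ̂)` is the interval of
`BNC(χ)` with minimum `0_{BNC_ffb(χ̂)}` and maximum the one-block partition `1_χ = ⊤`. -/

theorem statement1 {n' : ℕ} (χh : Fin n' → LRB)
    (χ : Fin (n' + countB χh) → LRside) (hχ : IsReplacement χh χ) :
    zeroFfb χh ∈ BNC χ ∧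
    (∀ π ∈ BNC χ, (π ∈ BNCffb χh χ ↔ zeroFfb χh ≤ π)) ∧
    (⊤ : Setoid (Fin (n' + countB χh))) ∈ BNCffb χh χ ∧
    BNCffb χh χ = {π | π ∈ BNC χ ∧ zeroFfb χh ≤ π ∧ π ≤ ⊤} := by
  -- values of χ on the pairs
  have hval : ∀ i : Fin n', χh i = LRB.b →
      ∀ h : (fMap χh i : ℕ) + 1 < n' + countB χh,
        χ (fMap χh i) = LRside.l ∧ χ ⟨(fMap χh i : ℕ) + 1, h⟩ = LRside.r := by
    intro i hib h
    obtain ⟨hl, hr⟩ := (hχ i).2.2 hib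
    exact ⟨hl, hr h⟩
  -- zeroFfb ∈ BNC χ
  have hzero : zeroFfb χh ∈ BNC χ := by
    intro a b c d hab hbc hcd hac hbd
    have hac' : Relation.EqvGen (pairRel χh) (sChi χ a) (sChi χ c) := hac
    have hbd' : Relation.EqvGen (pairRel χh) (sChi χ b) (sChi χ d) := hbd
    exfalso
    -- both must be genuine pairs, with the `l` element at the smaller position
    have key : ∀ u v : Fin (n' + countB χh), u < v →
        (sChi χ u = sChi χ v ∨ pairRel χh (sChi χ u) (sChi χ v) ∨
          pairRel χh (sChi χ v) (sChi χ u)) →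
        ∃ (i : Fin n') (h : (fMap χh i : ℕ) + 1 < n' + countB χh),
          χh i = LRB.b ∧ sChi χ u = fMap χh i ∧ sChi χ v = ⟨(fMap χh i : ℕ) + 1, h⟩ := by
      intro u v huv hcase
      rcases hcase with heq | hp | hp
      · exact absurd ((sChi χ).injective heq) (ne_of_lt huv)
      · exact hp
      · -- impossible: then χ(sChi u) = r and χ(sChi v) = l but u < v
        obtain ⟨i, hi, hib, hv, hu⟩ := hp
        obtain ⟨hl, hr⟩ := hval i hib hi
        have h1 : χ (sChi χ u) = LRside.r := by rw [hu]; exact hr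
        have h2 : χ (sChi χ v) = LRside.l := by rw [hv]; exact hl
        have := le_of_chi_r χ u h1
        have := lt_of_chi_l χ v h2
        have : (u : ℕ) < v := huv
        omega
    obtain ⟨i, hi, hib, hua, huc⟩ := key a c (hab.trans hbc) (eqvGen_pairRel χh hac')
    obtain ⟨j, hj, hjb, hub, hud⟩ := key b d (hbc.trans hcd) (eqvGen_pairRel χh hbd')
    obtain ⟨hli, hri⟩ := hval i hib hi
    obtain ⟨hlj, hrj⟩ := hval j hjb hj
    -- a < b, both ℓ: f i < f j
    have h1 : sChi χ a < sChi χ b := sChi_lt_of_l χ hab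
      (by rw [hua]; exact hli) (by rw [hub]; exact hlj)
    -- c < d, both r: f j + 1 < f i + 1
    have h2 : sChi χ d < sChi χ c := sChi_gt_of_r χ hcd
      (by rw [huc]; exact hri) (by rw [hud]; exact hrj)
    have e1 : (fMap χh i : ℕ) < fMap χh j := by rw [hua, hub] at h1; exact h1
    have e2 : (fMap χh j : ℕ) + 1 < (fMap χh i : ℕ) + 1 := by
      rw [huc, hud] at h2; exact h2
    omega
  -- the interval characterization
  have hiff : ∀ π ∈ BNC χ, (π ∈ BNCffb χh χ ↔ zeroFfb χh ≤ π) := by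
    intro π hπ
    constructor
    · rintro ⟨-, hffb⟩
      apply Setoid.eqvGen_le
      rintro x y ⟨i, hi, hib, hx, hy⟩
      subst hx; subst hy
      exact hffb i hib hi
    · intro hle
      refine ⟨hπ, fun i hib h => ?_⟩
      exact hle (Relation.EqvGen.rel _ _ ⟨i, h, hib, rfl, rfl⟩)
  have htop : (⊤ : Setoid (Fin (n' + countB χh))) ∈ BNCffb χh χ := by
    refine ⟨fun a b c d _ _ _ _ _ => trivial, fun i _ _ => trivial⟩
  refine ⟨hzero, hiff, htop, ?_⟩
  ext π
  simp only [Set.mem_setOf_eq]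
  constructor
  · intro hmem
    exact ⟨hmem.1, (hiff π hmem.1).mp hmem, le_top⟩
  · rintro ⟨h1, h2, -⟩
    exact (hiff π h1).mpr h2
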